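/- Suppose the simplex method with the highest-gain pivoting rule on a uniformly discounted deterministic MDP pivots from policy π to policy π', and π' contains a cycle that is not a cycle of π. Then, for any optimal policy π* with flux vector x*, r^T(x* − x^{π'}) ≤ (1 − 1/n)·r^T(x* − x^π). -/

import Mathlib

open Finset

/-- A deterministic Markov decision process: each action `a` is usable in the
single state `src a`, gives reward `r a`, and moves deterministically to `tgt a`.
Every state has at least one usable action. -/
structure DetMDP (S A : Type) where
  src : A → S
  tgt : A → S
  r : A → ℝ
  exists_action : ∀ s : S, ∃ a : A, src a = s

namespace DetMDP

variable {S A : Type} [Fintype S] [Fintype A] [DecidableEq S] [DecidableEq A]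
variable (M : DetMDP S A)

/-- `π : S → A` is a policy if it assigns to each state an action usable there. -/
def IsPolicy (π : S → A) : Prop := ∀ s : S, M.src (π s) = s

/-- The next-state map of a policy. -/
def step (π : S → A) (s : S) : S := M.tgt (π s)

/-- `v` is the value vector of policy `π` with uniform discount `γ`:
the unique solution of `v = r_π + γ (P^π)ᵀ v`, stated pointwise. -/
def IsValue (γ : ℝ) (π : S → A) (v : S → ℝ) : Prop :=
  ∀ s : S, v s = M.r (π s) + γ * v (M.tgt (π s))

/-- The gain (reduced cost) of action `a` with respect to a value vector `v`. -/
def gain (γ : ℝ) (v : S → ℝ) (a : A) : ℝ :=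
  M.r a + γ * v (M.tgt a) - v (M.src a)

/-- `x` is the flux vector of policy `π`: it vanishes off the policy, and on the
policy it satisfies the flux (flow conservation) equations of the primal LP. -/
def IsFlux (γ : ℝ) (π : S → A) (x : A → ℝ) : Prop :=
  (∀ a : A, a ≠ π (M.src a) → x a = 0) ∧
  ∀ s : S, (∑ a ∈ univ.filter fun a => M.src a = s, x a)
      = 1 + γ * ∑ a ∈ univ.filter fun a => M.tgt a = s, x a

/-- Action `a` is a cycle action of policy `π`: it is in `π` and its source state
lies on a cycle of the functional graph of `π` (periods are at most `|S|`). -/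
def OnCycle (π : S → A) (a : A) : Prop :=
  a = π (M.src a) ∧
    ∃ k ∈ Finset.Icc 1 (Fintype.card S), (M.step π)^[k] (M.src a) = M.src a

/-- `C` is (the action set of) a cycle of the policy `π`. -/
def IsCycleOf (π : S → A) (C : Finset A) : Prop :=
  ∃ s : S, (∃ k ∈ Finset.Icc 1 (Fintype.card S), (M.step π)^[k] s = s) ∧
    C = (Finset.range (Fintype.card S)).image fun i => π ((M.step π)^[i] s)

/-- One pivot of the simplex method with the highest-gain rule: switch to the
action of (strictly positive) maximal gain. -/
def SimplexPivot (γ : ℝ) (π π' : S → A) : Prop :=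
  ∃ (v : S → ℝ) (a : A), M.IsValue γ π v ∧ 0 < M.gain γ v a ∧
    (∀ b : A, M.gain γ v b ≤ M.gain γ v a) ∧ π' = Function.update π (M.src a) a

/-- A policy is terminal if all gains are nonpositive. -/
def IsTerminal (γ : ℝ) (π : S → A) : Prop :=
  ∃ v : S → ℝ, M.IsValue γ π v ∧ ∀ a : A, M.gain γ v a ≤ 0

/-- An execution of the simplex method with the highest-gain pivoting rule:
at every time step either a pivot occurs, or the current policy is terminal
(and the sequence stays constant). -/
def IsExecution (γ : ℝ) (seq : ℕ → S → A) : Prop :=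
  (∀ t : ℕ, M.IsPolicy (seq t)) ∧
  ∀ t : ℕ, M.SimplexPivot γ (seq t) (seq (t + 1)) ∨
    (M.IsTerminal γ (seq t) ∧ seq (t + 1) = seq t)

/-- Iteration `t` of the execution creates a new cycle. -/
def NewCycleAt (seq : ℕ → S → A) (t : ℕ) : Prop :=
  ∃ C : Finset A, M.IsCycleOf (seq (t + 1)) C ∧ ¬ M.IsCycleOf (seq t) C

/-- The feasible region of the primal flux LP. -/
def feasible (γ : ℝ) : Set (A → ℝ) :=
  {x | (∀ a : A, 0 ≤ x a) ∧
    ∀ s : S, (∑ a ∈ univ.filter fun a => M.src a = s, x a)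
        = 1 + γ * ∑ a ∈ univ.filter fun a => M.tgt a = s, x a}

end DetMDP

/-!
Let `v` be the value vector of `π` and `g` the gains with respect to `v`. Gains differ from
rewards by a potential, so `r·(y - z) = g·y - g·z` for any two vectors satisfying the flow
equations. Since `g` vanishes on `π`, `r·(x* - x) = g·x* ≤ n G / (1 - γ)`, where `G = g a` is the
maximal gain and `n / (1 - γ)` is the total flux. Only the pivot action `a` carries gain in `π'`,
so `r·(x* - x') = g·x* - G x'(a)`. As `a` lies on the new cycle of `π'`, its flux `x'(a)` is at
least `1 / (1 - γ)`, hence `G x'(a) ≥ g·x* / n`.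
-/

open Function

theorem Finset.sum_comp_mul_eq_sum_mul_sum_filter {ι κ R : Type*} [Fintype ι] [Fintype κ]
    [DecidableEq κ] [NonUnitalNonAssocSemiring R] (g : ι → κ) (f : κ → R) (x : ι → R) :
    ∑ i, f (g i) * x i = ∑ k, f k * ∑ i ∈ univ.filter fun i => g i = k, x i := by
  rw [← sum_fiberwise univ g]
  refine sum_congr rfl fun k _ => ?_
  rw [mul_sum]
  exact sum_congr rfl fun i hi => by rw [(mem_filter.1 hi).2]

theorem nonneg_of_mul_le_succ_of_periodic {γ : ℝ} (hγ0 : 0 ≤ γ) (hγ1 : γ < 1) {w : ℕ → ℝ}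
    (hw : ∀ j, γ * w j ≤ w (j + 1)) {k : ℕ} (hk : 0 < k) (hper : w k = w 0) : 0 ≤ w 0 := by
  have hpow : ∀ j, γ ^ j * w 0 ≤ w j := by
    intro j
    induction j with
    | zero => simp
    | succ j ih =>
      calc γ ^ (j + 1) * w 0 = γ * (γ ^ j * w 0) := by ring
        _ ≤ γ * w j := mul_le_mul_of_nonneg_left ih hγ0
        _ ≤ w (j + 1) := hw j
  have hγk : γ ^ k < 1 := pow_lt_one₀ hγ0 hγ1 hk.ne'
  nlinarith [hpow k]

namespace DetMDP

variable {S A : Type} {M : DetMDP S A} {γ : ℝ} {π : S → A}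

theorem IsPolicy.injective (hπ : M.IsPolicy π) : Injective π :=
  LeftInverse.injective hπ

theorem IsPolicy.update [DecidableEq S] (hπ : M.IsPolicy π) (a : A) :
    M.IsPolicy (Function.update π (M.src a) a) := by
  intro s
  by_cases hs : s = M.src a
  · subst hs
    rw [update_self]
  · rw [update_of_ne hs, hπ s]

theorem IsPolicy.sum_eq_sum_apply [Fintype S] [Fintype A] {R : Type*} [AddCommMonoid R]
    {y : A → R} (hπ : M.IsPolicy π) (hy : ∀ a, a ≠ π (M.src a) → y a = 0) :
    ∑ a, y a = ∑ s, y (π s) := by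
  refine (Fintype.sum_of_injective π hπ.injective _ y ?_ fun _ => rfl).symm
  rintro a ha
  exact hy a fun h => ha ⟨M.src a, h.symm⟩

theorem gain_apply_eq_zero {v : S → ℝ} (hπ : M.IsPolicy π) (hv : M.IsValue γ π v) (s : S) :
    M.gain γ v (π s) = 0 := by
  rw [gain, hπ s, ← hv s, sub_self]

section Flux

variable [Fintype A] [DecidableEq S]

variable (M) in
def IsBalanced (γ : ℝ) (x : A → ℝ) : Prop :=
  ∀ s : S, (∑ a ∈ univ.filter fun a => M.src a = s, x a)
      = 1 + γ * ∑ a ∈ univ.filter fun a => M.tgt a = s, x a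

theorem IsFlux.isBalanced {x : A → ℝ} (hx : M.IsFlux γ π x) : M.IsBalanced γ x := hx.2

theorem IsPolicy.sum_filter_src_eq {R : Type*} [AddCommMonoid R] {y : A → R}
    (hπ : M.IsPolicy π) (hy : ∀ a, a ≠ π (M.src a) → y a = 0) (s : S) :
    ∑ a ∈ univ.filter (fun a => M.src a = s), y a = y (π s) := by
  refine sum_eq_single_of_mem (π s) (mem_filter.2 ⟨mem_univ _, hπ s⟩) fun b hb hbs => hy b ?_
  rwa [(mem_filter.1 hb).2]

theorem IsFlux.flow_eq {x : A → ℝ} (hπ : M.IsPolicy π) (hx : M.IsFlux γ π x) (s : S) :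
    x (π s) = 1 + γ * ∑ a ∈ univ.filter (fun a => M.tgt a = s), x a :=
  (hπ.sum_filter_src_eq hx.1 s).symm.trans (hx.2 s)

variable [Fintype S]

/-- The negative parts `m` of a policy flux satisfy `∑ m ≤ γ ∑ m`, which forces them to vanish. -/
theorem IsFlux.nonneg {x : A → ℝ} (hγ0 : 0 ≤ γ) (hγ1 : γ < 1) (hπ : M.IsPolicy π)
    (hx : M.IsFlux γ π x) (a : A) : 0 ≤ x a := by
  set m : A → ℝ := fun a => max (-x a) 0 with hm
  have hm0 : ∀ a, 0 ≤ m a := fun a => le_max_right _ _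
  have hstep : ∀ s, m (π s) ≤ γ * ∑ a ∈ univ.filter (fun a => M.tgt a = s), m a := by
    intro s
    have hneg : -∑ a ∈ univ.filter (fun a => M.tgt a = s), x a
        ≤ ∑ a ∈ univ.filter (fun a => M.tgt a = s), m a := by
      rw [← sum_neg_distrib]
      exact sum_le_sum fun a _ => le_max_left _ _
    refine max_le ?_ (mul_nonneg hγ0 (sum_nonneg fun a _ => hm0 a))
    rw [hx.flow_eq hπ s]
    nlinarith [mul_le_mul_of_nonneg_left hneg hγ0]
  have hsum : ∑ a, m a ≤ γ * ∑ a, m a :=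
    calc ∑ a, m a = ∑ s, m (π s) := hπ.sum_eq_sum_apply fun a ha => by simp [hm, hx.1 a ha]
      _ ≤ ∑ s, γ * ∑ a ∈ univ.filter (fun a => M.tgt a = s), m a := sum_le_sum fun s _ => hstep s
      _ = γ * ∑ a, m a := by rw [← mul_sum, sum_fiberwise]
  have hsum0 : ∑ a, m a = 0 :=
    le_antisymm (by nlinarith [sum_nonneg fun a (_ : a ∈ univ) => hm0 a])
      (sum_nonneg fun a _ => hm0 a)
  have hma : m a = 0 := (sum_eq_zero_iff_of_nonneg fun a _ => hm0 a).1 hsum0 a (mem_univ a)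
  linarith [le_max_left (-x a) 0]

theorem IsFlux.one_add_mul_le_apply_step {x : A → ℝ} (hγ0 : 0 ≤ γ) (hγ1 : γ < 1)
    (hπ : M.IsPolicy π) (hx : M.IsFlux γ π x) (s : S) :
    1 + γ * x (π s) ≤ x (π (M.step π s)) := by
  have hle : x (π s) ≤ ∑ a ∈ univ.filter (fun a => M.tgt a = M.step π s), x a :=
    single_le_sum (fun a _ => hx.nonneg hγ0 hγ1 hπ a) (mem_filter.2 ⟨mem_univ _, rfl⟩)
  rw [hx.flow_eq hπ (M.step π s)]
  nlinarith [mul_le_mul_of_nonneg_left hle hγ0]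

/-- Along a cycle of `π` the flux grows by the affine map `u ↦ 1 + γ u`, whose fixed point is
`1 / (1 - γ)`. -/
theorem IsFlux.one_le_mul_of_mem_periodicPts {x : A → ℝ} (hγ0 : 0 ≤ γ) (hγ1 : γ < 1)
    (hπ : M.IsPolicy π) (hx : M.IsFlux γ π x) {s : S} (hs : s ∈ periodicPts (M.step π)) :
    1 ≤ (1 - γ) * x (π s) := by
  obtain ⟨k, hk, hper⟩ := hs
  have h := nonneg_of_mul_le_succ_of_periodic hγ0 hγ1
    (w := fun j => (1 - γ) * x (π ((M.step π)^[j] s)) - 1) (fun j => ?_) hk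
    (by simp only [hper.eq, iterate_zero_apply])
  · simpa using h
  · have := hx.one_add_mul_le_apply_step hγ0 hγ1 hπ ((M.step π)^[j] s)
    simp only [iterate_succ_apply']
    nlinarith

theorem IsBalanced.one_sub_mul_sum_eq_card {x : A → ℝ} (hx : M.IsBalanced γ x) :
    (1 - γ) * ∑ a, x a = Fintype.card S := by
  have h : ∑ a, x a = Fintype.card S + γ * ∑ a, x a :=
    calc ∑ a, x a = ∑ s, ∑ a ∈ univ.filter (fun a => M.src a = s), x a :=
          (sum_fiberwise _ _ _).symm
      _ = ∑ s, (1 + γ * ∑ a ∈ univ.filter (fun a => M.tgt a = s), x a) :=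
          sum_congr rfl fun s _ => hx s
      _ = Fintype.card S + γ * ∑ a, x a := by
          rw [sum_add_distrib, ← mul_sum, sum_fiberwise]
          simp
  linarith

theorem IsBalanced.sum_gain_mul_eq {x : A → ℝ} (hx : M.IsBalanced γ x) (v : S → ℝ) :
    ∑ a, M.gain γ v a * x a = ∑ a, M.r a * x a - ∑ s, v s := by
  have hsrc : ∑ a, v (M.src a) * x a = ∑ s, v s + γ * ∑ a, v (M.tgt a) * x a := by
    rw [sum_comp_mul_eq_sum_mul_sum_filter M.src v x,
      sum_comp_mul_eq_sum_mul_sum_filter M.tgt v x, mul_sum, ← sum_add_distrib]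
    exact sum_congr rfl fun s _ => by rw [hx s]; ring
  calc ∑ a, M.gain γ v a * x a
      = ∑ a, M.r a * x a + γ * ∑ a, v (M.tgt a) * x a - ∑ a, v (M.src a) * x a := by
        rw [mul_sum, ← sum_add_distrib, ← sum_sub_distrib]
        exact sum_congr rfl fun a _ => by rw [gain]; ring
    _ = ∑ a, M.r a * x a - ∑ s, v s := by rw [hsrc]; ring

theorem sum_mul_sub_eq_sum_gain_mul_sub {x y : A → ℝ} (hx : M.IsBalanced γ x)
    (hy : M.IsBalanced γ y) (v : S → ℝ) :
    ∑ a, M.r a * (x a - y a) = ∑ a, M.gain γ v a * x a - ∑ a, M.gain γ v a * y a := by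
  rw [hx.sum_gain_mul_eq, hy.sum_gain_mul_eq]
  simp only [mul_sub, sum_sub_distrib]
  ring

theorem sum_gain_mul_flux_eq_zero {v : S → ℝ} {x : A → ℝ} (hπ : M.IsPolicy π)
    (hv : M.IsValue γ π v) (hx : M.IsFlux γ π x) : ∑ a, M.gain γ v a * x a = 0 := by
  rw [hπ.sum_eq_sum_apply fun a ha => by rw [hx.1 a ha, mul_zero]]
  simp [gain_apply_eq_zero hπ hv]

theorem sum_gain_mul_flux_update_eq {v : S → ℝ} {a : A} {x : A → ℝ} (hπ : M.IsPolicy π)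
    (hv : M.IsValue γ π v) (hx : M.IsFlux γ (Function.update π (M.src a) a) x) :
    ∑ b, M.gain γ v b * x b = M.gain γ v a * x a := by
  rw [(hπ.update a).sum_eq_sum_apply fun b hb => by rw [hx.1 b hb, mul_zero],
    sum_eq_single (M.src a) fun s _ hs => by
      rw [update_of_ne hs, gain_apply_eq_zero hπ hv, zero_mul]]
  · rw [update_self]
  · simp

theorem one_sub_mul_sum_gain_mul_le {v : S → ℝ} {a : A} {x : A → ℝ} (hγ1 : γ < 1)
    (hmax : ∀ b, M.gain γ v b ≤ M.gain γ v a) (hx0 : ∀ b, 0 ≤ x b) (hx : M.IsBalanced γ x) :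
    (1 - γ) * ∑ b, M.gain γ v b * x b ≤ Fintype.card S * M.gain γ v a := by
  calc (1 - γ) * ∑ b, M.gain γ v b * x b ≤ (1 - γ) * ∑ b, M.gain γ v a * x b :=
        mul_le_mul_of_nonneg_left (sum_le_sum fun b _ => mul_le_mul_of_nonneg_right (hmax b)
          (hx0 b)) (by linarith)
    _ = Fintype.card S * M.gain γ v a := by rw [← mul_sum, ← hx.one_sub_mul_sum_eq_card]; ring

end Flux

theorem src_mem_periodicPts_of_new_cycle [Fintype S] [DecidableEq S] [DecidableEq A] {a : A}
    {C : Finset A} (hC : M.IsCycleOf (Function.update π (M.src a) a) C)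
    (hnC : ¬ M.IsCycleOf π C) :
    M.src a ∈ periodicPts (M.step (Function.update π (M.src a) a)) := by
  set π' := Function.update π (M.src a) a
  obtain ⟨s, ⟨k, hk, hper⟩, rfl⟩ := hC
  by_cases hhit : ∃ i, (M.step π')^[i] s = M.src a
  · obtain ⟨i, hi⟩ := hhit
    exact hi ▸ mk_mem_periodicPts (mem_Icc.1 hk).1 (IsPeriodicPt.apply_iterate hper i)
  · push Not at hhit
    have hagree : ∀ i, π' ((M.step π')^[i] s) = π ((M.step π')^[i] s) :=
      fun i => update_of_ne (hhit i) _ _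
    have horbit : ∀ i, (M.step π')^[i] s = (M.step π)^[i] s := by
      intro i
      induction i with
      | zero => rfl
      | succ i ih =>
        rw [iterate_succ_apply', iterate_succ_apply', ← ih]
        exact congrArg M.tgt (hagree i)
    refine absurd ⟨s, ⟨k, hk, horbit k ▸ hper⟩, ?_⟩ hnC
    congr 1
    funext i
    rw [hagree, horbit]

end DetMDP

open DetMDP

theorem cycle_pivot_contraction_general
    {S A : Type} [Fintype S] [Fintype A] [DecidableEq S] [DecidableEq A]
    (M : DetMDP S A) (γ : ℝ) (hγ0 : 0 ≤ γ) (hγ1 : γ < 1)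
    (π π' : S → A) (hπ : M.IsPolicy π)
    (hpivot : M.SimplexPivot γ π π')
    (hnew : ∃ C : Finset A, M.IsCycleOf π' C ∧ ¬ M.IsCycleOf π C)
    (πstar : S → A) (hπstar : M.IsPolicy πstar)
    (xstar : A → ℝ) (hxstar : M.IsFlux γ πstar xstar)
    (x x' : A → ℝ) (hx : M.IsFlux γ π x) (hx' : M.IsFlux γ π' x') :
    ∑ a : A, M.r a * (xstar a - x' a)
      ≤ (1 - 1 / (Fintype.card S : ℝ)) * ∑ a : A, M.r a * (xstar a - x a) := by
  obtain ⟨v, a, hv, hGpos, hGmax, rfl⟩ := hpivot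
  obtain ⟨C, hC, hnC⟩ := hnew
  have hu : 1 ≤ (1 - γ) * x' a := by
    simpa using hx'.one_le_mul_of_mem_periodicPts hγ0 hγ1 (hπ.update a)
      (src_mem_periodicPts_of_new_cycle hC hnC)
  have hD := one_sub_mul_sum_gain_mul_le hγ1 hGmax (hxstar.nonneg hγ0 hγ1 hπstar)
    hxstar.isBalanced
  have hn : (0 : ℝ) < Fintype.card S := by exact_mod_cast Fintype.card_pos_iff.2 ⟨M.src a⟩
  rw [sum_mul_sub_eq_sum_gain_mul_sub hxstar.isBalanced hx'.isBalanced v,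
    sum_mul_sub_eq_sum_gain_mul_sub hxstar.isBalanced hx.isBalanced v,
    sum_gain_mul_flux_update_eq hπ hv hx', sum_gain_mul_flux_eq_zero hπ hv hx, sub_zero]
  set D := ∑ b, M.gain γ v b * xstar b
  set G := M.gain γ v a
  have hDle : D ≤ Fintype.card S * (G * x' a) :=
    le_of_mul_le_mul_left (hD.trans (by nlinarith [mul_pos hn hGpos])) (by linarith : 0 < 1 - γ)
  calc D - G * x' a ≤ D - D / Fintype.card S := by
        gcongr
        rwa [div_le_iff₀ hn, mul_comm]
    _ = (1 - 1 / Fintype.card S) * D := by ring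

/-- If the simplex method pivots from `π` to `π'` creating a new
cycle, then for any optimal policy `π*` with flux `x*`,
`rᵀ(x* − x^{π'}) ≤ (1 − 1/n)·rᵀ(x* − x^π)`. -/
theorem cycle_pivot_contraction
    {S A : Type} [Fintype S] [Fintype A] [DecidableEq S] [DecidableEq A]
    (M : DetMDP S A) (γ : ℝ) (hγ0 : 0 ≤ γ) (hγ1 : γ < 1)
    (π π' : S → A) (hπ : M.IsPolicy π)
    (hpivot : M.SimplexPivot γ π π')
    (hnew : ∃ C : Finset A, M.IsCycleOf π' C ∧ ¬ M.IsCycleOf π C)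
    (πstar : S → A) (hπstar : M.IsPolicy πstar)
    (xstar : A → ℝ) (hxstar : M.IsFlux γ πstar xstar)
    (hopt : ∀ (π'' : S → A) (x'' : A → ℝ), M.IsPolicy π'' → M.IsFlux γ π'' x'' →
      ∑ a : A, M.r a * x'' a ≤ ∑ a : A, M.r a * xstar a)
    (x x' : A → ℝ) (hx : M.IsFlux γ π x) (hx' : M.IsFlux γ π' x') :
    ∑ a : A, M.r a * (xstar a - x' a)
      ≤ (1 - 1 / (Fintype.card S : ℝ)) * ∑ a : A, M.r a * (xstar a - x a) :=
  cycle_pivot_contraction_general M γ hγ0 hγ1 π π' hπ hpivot hnew πstar hπstar xstar hxstar x x' hx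
    hx'
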